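/- arXiv:1001.3175 — 2 statements merged into one kernel-verified Lean document; each statement's English description precedes it below -/
import Mathlib

section
/- Every finite Eulerian binomial poset of rank 4 is isomorphic to either the butterfly poset T_4 or the boolean lattice B_4. -/
open scoped Classical

/-! ## Basic notions: saturated chains, rank functions, Euler–Poincaré, Eulerian,
binomial / Sheffer / triangular posets. -/

/-- A saturated (maximal) chain from `x` to `y` in a poset, encoded as a list. -/
def IsSatChain {α : Type*} [PartialOrder α] (x y : α) (l : List α) : Prop :=
  l.Chain' (· ⋖ ·) ∧ l.head? = some x ∧ l.getLast? = some y

/-- The number of maximal chains of the interval `[x, y]`. -/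
noncomputable def chainCount {α : Type*} [PartialOrder α] (x y : α) : ℕ :=
  Nat.card {l : List α // IsSatChain x y l}

/-- `rk` is a rank function for a graded poset with `⊥`:
the bottom has rank `0` and ranks increase by one across cover relations. -/
def IsRankFunction {α : Type*} [PartialOrder α] [OrderBot α] (rk : α → ℕ) : Prop :=
  rk ⊥ = 0 ∧ ∀ x y : α, x ⋖ y → rk y = rk x + 1

/-- The interval `[x, y]` satisfies the Euler–Poincaré relation: it has as many elements
of even rank as of odd rank. -/
def EulerPoincare {α : Type*} [Fintype α] [PartialOrder α] (rk : α → ℕ) (x y : α) : Prop :=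
  (Finset.univ.filter fun z => x ≤ z ∧ z ≤ y ∧ Even (rk z)).card =
    (Finset.univ.filter fun z => x ≤ z ∧ z ≤ y ∧ ¬ Even (rk z)).card

/-- A graded poset is Eulerian if every non-singleton interval satisfies
the Euler–Poincaré relation. -/
def IsEulerian {α : Type*} [Fintype α] [PartialOrder α] (rk : α → ℕ) : Prop :=
  ∀ x y : α, x < y → EulerPoincare rk x y

/-- A binomial poset: the number of maximal chains of an interval depends only
on its length, via the factorial function `B`. -/
def IsBinomial {α : Type*} [PartialOrder α] (rk : α → ℕ) (B : ℕ → ℕ) : Prop :=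
  ∀ x y : α, x ≤ y → chainCount x y = B (rk y - rk x)

/-- A Sheffer poset: Sheffer intervals `[⊥, y]` have `D (ρ y)` maximal chains and binomial
intervals `[x, y]` with `x ≠ ⊥` have `B (ρ y - ρ x)` maximal chains. -/
def IsSheffer {α : Type*} [PartialOrder α] [OrderBot α] (rk : α → ℕ) (B D : ℕ → ℕ) : Prop :=
  (∀ y : α, chainCount ⊥ y = D (rk y)) ∧
    (∀ x y : α, x ≠ ⊥ → x ≤ y → chainCount x y = B (rk y - rk x))

/-- A triangular poset: the number of maximal chains of `[x, y]` depends only on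
`ρ x` and `ρ y`. -/
def IsTriangular {α : Type*} [PartialOrder α] (rk : α → ℕ) (B : ℕ → ℕ → ℕ) : Prop :=
  ∀ x y : α, x ≤ y → chainCount x y = B (rk x) (rk y)

/-! ## Constructions: summations, dual suspension, butterfly posets, polygon face lattices. -/

/-- The proper part of a bounded poset. -/
abbrev ProperPart (Q : Type*) [PartialOrder Q] [OrderBot Q] [OrderTop Q] : Type _ :=
  {x : Q // x ≠ ⊥ ∧ x ≠ ⊤}

/-- The summation `⊞_{i} Q i` of a family of bounded posets: identify all the minimal
elements and all the maximal elements of the disjoint union of the `Q i`. -/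
abbrev FamSum {ι : Type*} (Q : ι → Type*) [∀ i, PartialOrder (Q i)] [∀ i, OrderBot (Q i)]
    [∀ i, OrderTop (Q i)] : Type _ :=
  WithBot (WithTop ((i : ι) × ProperPart (Q i)))

/-- The `k`-summation `⊞^k Q`: identify all the minimal elements and all the maximal
elements of `k` disjoint copies of `Q`. -/
abbrev KSum (k : ℕ) (Q : Type*) [PartialOrder Q] [OrderBot Q] [OrderTop Q] : Type _ :=
  FamSum (fun _ : Fin k => Q)

/-- The rank function of a `k`-summation, induced by a rank function on `Q`. -/
def ksumRk {k : ℕ} {Q : Type*} [PartialOrder Q] [OrderBot Q] [OrderTop Q] (rk : Q → ℕ) :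
    KSum k Q → ℕ :=
  WithBot.recBotCoe 0 (WithTop.recTopCoe (rk ⊤) (fun s => rk s.2.1))

/-- The underlying type of the dual suspension minus its bottom: two new atoms together
with the proper (non-bottom) part of `P`. -/
def DSuspMid (P : Type*) [PartialOrder P] [OrderBot P] : Type _ :=
  Fin 2 ⊕ {x : P // x ≠ ⊥}

instance DSuspMid.partialOrder (P : Type*) [PartialOrder P] [OrderBot P] :
    PartialOrder (DSuspMid P) where
  le a b :=
    match a, b with
    | .inl i, .inl j => i = j
    | .inl _, .inr _ => True
    | .inr _, .inl _ => False
    | .inr x, .inr y => x ≤ y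
  le_refl a := by cases a with
    | inl i => exact rfl
    | inr x => exact le_refl x.1
  le_trans a b c hab hbc := by
    cases a with
    | inl i =>
      cases c with
      | inl k =>
        cases b with
        | inl j => exact Eq.trans (hab : i = j) (hbc : j = k)
        | inr y => exact ((hbc : False)).elim
      | inr z => trivial
    | inr x =>
      cases b with
      | inl j => exact ((hab : False)).elim
      | inr y =>
        cases c with
        | inl k => exact ((hbc : False)).elim
        | inr z => exact le_trans (α := {x : P // x ≠ ⊥}) hab hbc
  le_antisymm a b hab hba := by
    cases a with
    | inl i =>
      cases b with
      | inl j => exact congrArg Sum.inl (hab : _ = _)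
      | inr y => exact ((hba : False)).elim
    | inr x =>
      cases b with
      | inl j => exact ((hab : False)).elim
      | inr y => exact congrArg Sum.inr (le_antisymm (α := {x : P // x ≠ ⊥}) hab hba)

/-- The dual suspension `Σ*(P)`: insert two new elements between `⊥` and the atoms of `P`. -/
abbrev DSusp (P : Type*) [PartialOrder P] [OrderBot P] : Type _ :=
  WithBot (DSuspMid P)

/-- The rank function of the dual suspension induced by a rank function on `P`. -/
def dsuspRk {P : Type*} [PartialOrder P] [OrderBot P] (rk : P → ℕ) : DSusp P → ℕ :=
  WithBot.recBotCoe 0 (Sum.elim (fun _ => 1) (fun x => rk x.1 + 1))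

noncomputable instance DSuspMid.fintype (P : Type*) [PartialOrder P] [OrderBot P] [Fintype P] :
    Fintype (DSuspMid P) := by
  unfold DSuspMid; infer_instance

instance DSuspMid.orderTop (P : Type*) [PartialOrder P] [OrderBot P] [OrderTop P] [Nontrivial P] :
    OrderTop (DSuspMid P) where
  top := Sum.inr ⟨⊤, fun h => by
    rcases exists_pair_ne P with ⟨a, b, hab⟩
    have ha : a = ⊤ := le_antisymm le_top (h.le.trans bot_le)
    have hb : b = ⊤ := le_antisymm le_top (h.le.trans bot_le)
    exact hab (ha.trans hb.symm)⟩
  le_top a := by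
    cases a with
    | inl i => trivial
    | inr x => exact le_top (α := P) (a := x.1)

/-- The butterfly poset `T n` of rank `n`: a `⊥`, a `⊤`, and two elements at each rank
`1, …, n - 1`; any two elements at consecutive ranks are comparable. -/
def Butterfly (n : ℕ) : Type :=
  {p : Fin (n + 1) × Fin 2 // ((p.1 : ℕ) = 0 ∨ (p.1 : ℕ) = n) → p.2 = 0}

namespace Butterfly

instance (n : ℕ) : PartialOrder (Butterfly n) where
  le p q := p = q ∨ (p.1.1 : ℕ) < (q.1.1 : ℕ)
  le_refl p := Or.inl rfl
  le_trans p q r h₁ h₂ := by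
    rcases h₁ with rfl | h₁
    · exact h₂
    · rcases h₂ with rfl | h₂
      · exact Or.inr h₁
      · exact Or.inr (h₁.trans h₂)
  le_antisymm p q h₁ h₂ := by
    rcases h₁ with rfl | h₁
    · rfl
    · rcases h₂ with rfl | h₂
      · rfl
      · exact absurd (h₁.trans h₂) (lt_irrefl _)

instance (n : ℕ) : OrderBot (Butterfly n) where
  bot := ⟨(0, 0), fun _ => rfl⟩
  bot_le p := by
    rcases Nat.eq_zero_or_pos (p.1.1 : ℕ) with h | h
    · left
      apply Subtype.ext
      have h2 : p.1.2 = 0 := p.2 (Or.inl (by exact_mod_cast h))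
      apply Prod.ext
      · exact (Fin.ext (by simpa using h.symm))
      · exact h2.symm
    · exact Or.inr (by simpa using h)

instance (n : ℕ) : OrderTop (Butterfly n) where
  top := ⟨(Fin.last n, 0), fun _ => rfl⟩
  le_top p := by
    rcases eq_or_lt_of_le (Nat.lt_succ_iff.mp p.1.1.isLt) with h | h
    · left
      apply Subtype.ext
      have h2 : p.1.2 = 0 := p.2 (Or.inr h)
      apply Prod.ext
      · exact (Fin.ext (by simpa using h))
      · exact h2
    · exact Or.inr (by simpa using h)

instance (n : ℕ) : Fintype (Butterfly n) := by
  unfold Butterfly; exact Subtype.fintype _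

/-- The rank function of the butterfly poset. -/
def rk {n : ℕ} (p : Butterfly n) : ℕ := p.1.1

end Butterfly

/-- The middle levels (vertices and edges) of the face lattice of a `q`-gon:
`(0, i)` is the `i`-th vertex and `(1, i)` is the edge joining vertices `i` and `i + 1`. -/
def PolyMid (q : ℕ) : Type := Fin 2 × Fin q

instance PolyMid.partialOrder (q : ℕ) : PartialOrder (PolyMid q) where
  le a b := a = b ∨ (a.1 = 0 ∧ b.1 = 1 ∧ (a.2 = b.2 ∨ (a.2 : ℕ) = ((b.2 : ℕ) + 1) % q))
  le_refl a := Or.inl rfl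
  le_trans a b c h₁ h₂ := by
    rcases h₁ with rfl | h₁
    · exact h₂
    · rcases h₂ with rfl | h₂
      · exact Or.inr h₁
      · obtain ⟨hb, _⟩ := h₂
        rw [h₁.2.1] at hb
        exact absurd hb (by decide)
  le_antisymm a b h₁ h₂ := by
    rcases h₁ with rfl | h₁
    · rfl
    · rcases h₂ with rfl | h₂
      · rfl
      · obtain ⟨hb, _⟩ := h₂
        rw [h₁.2.1] at hb
        exact absurd hb (by decide)

/-- The face lattice `P_q` of a `q`-gon. -/
abbrev PolygonFaceLattice (q : ℕ) : Type := WithBot (WithTop (PolyMid q))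

noncomputable instance ProperPart.fintype (Q : Type*) [Fintype Q] [PartialOrder Q]
    [OrderBot Q] [OrderTop Q] : Fintype (ProperPart Q) :=
  Subtype.fintype _

instance WithTop.instFintypeOfFintype {X : Type*} [Fintype X] : Fintype (WithTop X) :=
  inferInstanceAs (Fintype (Option X))

instance WithBot.instFintypeOfFintype {X : Type*} [Fintype X] : Fintype (WithBot X) :=
  inferInstanceAs (Fintype (Option X))

/-!
Splitting maximal chains at their second element gives `B n = a_n * B (n - 1)`, where `a_n` is
the number of atoms of any interval of length `n`, and the Euler–Poincaré relation makes every
interval of length two a diamond, so `B 2 = 2`. Let `a`, `m`, `c` count the elements of rank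
1, 2, 3 and let `u` count the rank-2 elements above an atom, so that `B 3 = 2 u`. Double counting
incident pairs gives `a = c` and `a u = 2 m`, while the Euler–Poincaré relation of the whole
poset reads `m + 2 = a + c`. Hence `a (4 - u) = 4`: either `a = 2, B 3 = 4` or `a = 4, B 3 = 6`.

In the first case each element lies below every element of the next rank, so the poset is
ordered by rank, like the butterfly `T 4`. In the second case `x ↦ {atoms below x}` maps onto
the subsets of the four atoms: two atoms lie below a common rank-3 element `c` (`3 + 3 > 4`),
hence below a common one of the three rank-2 elements under `c`, each atom being under two of
them (`2 + 2 > 3`); and each atom misses one of the four rank-3 elements. Both sides have sixteen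
elements, so the map is bijective, and the same pigeonhole argument under `c` shows that it
reflects the order.
-/

open Finset

section SaturatedChains

variable {α : Type*} [PartialOrder α] {x y z a b : α} {l t : List α}

lemma isSatChain_iff :
    IsSatChain x y l ↔ l.IsChain (· ⋖ ·) ∧ l.head? = some x ∧ l.getLast? = some y :=
  Iff.rfl

lemma not_isSatChain_nil : ¬ IsSatChain x y [] := by simp [isSatChain_iff]

lemma isSatChain_singleton : IsSatChain x y [a] ↔ a = x ∧ a = y := by
  simp [isSatChain_iff, eq_comm]

lemma isSatChain_cons_cons :
    IsSatChain x y (a :: b :: t) ↔ a = x ∧ x ⋖ b ∧ IsSatChain b y (b :: t) := by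
  simp only [isSatChain_iff, List.isChain_cons_cons, List.head?_cons, List.getLast?_cons_cons,
    Option.some.injEq, true_and]
  constructor
  · rintro ⟨⟨hab, hc⟩, rfl, hy⟩; exact ⟨rfl, hab, hc, hy⟩
  · rintro ⟨rfl, hab, hc, hy⟩; exact ⟨⟨hab, hc⟩, rfl, hy⟩

lemma IsSatChain.le : ∀ {x : α} {l : List α}, IsSatChain x y l → x ≤ y
  | _, [], h => (not_isSatChain_nil h).elim
  | _, [_], h => by obtain ⟨rfl, rfl⟩ := isSatChain_singleton.1 h; rfl
  | _, _ :: _ :: _, h => by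
    obtain ⟨rfl, hxb, hb⟩ := isSatChain_cons_cons.1 h
    exact hxb.le.trans hb.le

lemma IsSatChain.cons (hxz : x ⋖ z) (h : IsSatChain z y t) : IsSatChain x y (x :: t) := by
  obtain _ | ⟨b, s⟩ := t
  · exact (not_isSatChain_nil h).elim
  · obtain rfl : b = z := by simpa using h.2.1
    exact isSatChain_cons_cons.2 ⟨rfl, hxz, h⟩

lemma IsSatChain.exists_eq_cons (h : IsSatChain x y l) (hxy : x ≠ y) :
    ∃ z t, l = x :: t ∧ x ⋖ z ∧ IsSatChain z y t := by
  obtain _ | ⟨a, _ | ⟨b, t⟩⟩ := l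
  · exact (not_isSatChain_nil h).elim
  · obtain ⟨rfl, rfl⟩ := isSatChain_singleton.1 h; exact (hxy rfl).elim
  · obtain ⟨rfl, hxb, hb⟩ := isSatChain_cons_cons.1 h
    exact ⟨b, b :: t, rfl, hxb, hb⟩

lemma chainCount_self (x : α) : chainCount x x = 1 := by
  have : Unique {l : List α // IsSatChain x x l} :=
    { default := ⟨[x], isSatChain_singleton.2 ⟨rfl, rfl⟩⟩
      uniq := fun ⟨l, hl⟩ => by
        obtain _ | ⟨a, _ | ⟨b, t⟩⟩ := l
        · exact (not_isSatChain_nil hl).elim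
        · obtain ⟨rfl, -⟩ := isSatChain_singleton.1 hl; rfl
        · obtain ⟨rfl, hab, hb⟩ := isSatChain_cons_cons.1 hl
          exact (hab.lt.not_ge hb.le).elim }
  exact Nat.card_unique

lemma finite_satChains [Finite α] (x y : α) : Finite {l : List α // IsSatChain x y l} := by
  have := Fintype.ofFinite α
  refine Set.Finite.subset (List.finite_length_le α (Fintype.card α)) fun l hl => ?_
  have hp : l.Pairwise (· < ·) := List.isChain_iff_pairwise.1 (hl.1.imp fun _ _ h => h.lt)
  exact List.Nodup.length_le_card (hp.imp ne_of_lt)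

end SaturatedChains

section ChainCount

variable {α : Type*} [PartialOrder α] {rk : α → ℕ} {B : ℕ → ℕ} {x y : α}

lemma exists_isSatChain [Finite α] (hxy : x ≤ y) : ∃ l, IsSatChain x y l := by
  induction x using WellFoundedGT.induction with
  | _ x ih =>
    rcases hxy.eq_or_lt with rfl | hlt
    · exact ⟨[x], isSatChain_singleton.2 ⟨rfl, rfl⟩⟩
    · obtain ⟨z, hxz, hzy⟩ := exists_covBy_le_of_lt hlt
      obtain ⟨t, ht⟩ := ih z hxz.lt hzy
      exact ⟨x :: t, ht.cons hxz⟩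

lemma chainCount_pos [Finite α] (hxy : x ≤ y) : 0 < chainCount x y := by
  have := finite_satChains x y
  obtain ⟨l, hl⟩ := exists_isSatChain hxy
  have : Nonempty {l // IsSatChain x y l} := ⟨⟨l, hl⟩⟩
  exact Nat.card_pos

lemma chainCount_eq_sum_covBy [Fintype α] (hxy : x < y) :
    chainCount x y = ∑ z ∈ univ.filter (fun z => x ⋖ z ∧ z ≤ y), chainCount z y := by
  have := fun z => finite_satChains z y
  let f : (Σ z : {z // x ⋖ z ∧ z ≤ y}, {t // IsSatChain z.1 y t}) →
      {l // IsSatChain x y l} := fun p => ⟨x :: p.2.1, p.2.2.cons p.1.2.1⟩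
  have hf : Function.Bijective f := by
    refine ⟨?_, fun ⟨l, hl⟩ => ?_⟩
    · rintro ⟨⟨z, hz⟩, t, ht⟩ ⟨⟨z', hz'⟩, t', ht'⟩ h
      obtain rfl : t = t' := (List.cons.inj (congrArg Subtype.val h)).2
      have hzz' : z = z' := Option.some.inj (ht.2.1.symm.trans ht'.2.1)
      exact Sigma.subtype_ext (Subtype.ext hzz') rfl
    · obtain ⟨z, t, rfl, hxz, ht⟩ := hl.exists_eq_cons hxy.ne
      exact ⟨⟨⟨z, hxz, ht.le⟩, t, ht⟩, rfl⟩
  rw [chainCount, ← Nat.card_congr (Equiv.ofBijective f hf), Nat.card_sigma]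
  exact (Finset.sum_subtype _ (by simp) fun z => chainCount z y).symm

lemma IsBinomial.B_zero (hB : IsBinomial rk B) (x : α) : B 0 = 1 := by
  simpa [chainCount_self] using (hB x x le_rfl).symm

end ChainCount

lemma lt_of_le_of_rk_lt {α : Type*} [PartialOrder α] {rk : α → ℕ} {x y : α} (hxy : x ≤ y)
    (h : rk x < rk y) : x < y :=
  hxy.lt_of_ne (ne_of_apply_ne rk h.ne)

lemma IsRankFunction.bot_lt {α : Type*} [PartialOrder α] [OrderBot α] {rk : α → ℕ} {x : α}
    (hrk : IsRankFunction rk) (hx : 0 < rk x) : ⊥ < x :=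
  lt_of_le_of_rk_lt bot_le (hrk.1 ▸ hx)

section RankFunction

variable {α : Type*} [PartialOrder α] [OrderBot α] [Finite α] {rk : α → ℕ} {x y : α}

lemma IsRankFunction.strictMono (hrk : IsRankFunction rk) : StrictMono rk := by
  intro x
  induction x using WellFoundedGT.induction with
  | _ x ih =>
    intro y hxy
    obtain ⟨z, hxz, hzy⟩ := exists_covBy_le_of_lt hxy
    have hz := hrk.2 x z hxz
    rcases hzy.eq_or_lt with rfl | hzy
    · omega
    · have := ih z hxz.lt hzy
      omega

lemma IsRankFunction.eq_of_le (hrk : IsRankFunction rk) (hxy : x ≤ y) (h : rk y ≤ rk x) :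
    x = y :=
  by_contra fun hne => (hrk.strictMono (hxy.lt_of_ne hne)).not_ge h

lemma IsRankFunction.covBy_iff (hrk : IsRankFunction rk) :
    x ⋖ y ↔ x < y ∧ rk y = rk x + 1 := by
  refine ⟨fun h => ⟨h.lt, hrk.2 x y h⟩, fun ⟨hxy, h⟩ => ⟨hxy, fun z hxz hzy => ?_⟩⟩
  have := hrk.strictMono hxz
  have := hrk.strictMono hzy
  omega

lemma IsRankFunction.exists_rk_eq (hrk : IsRankFunction rk) :
    ∀ {k}, k ≤ rk y → ∃ z ≤ y, rk z = k
  | 0, _ => ⟨⊥, bot_le, hrk.1⟩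
  | k + 1, hk => by
    obtain ⟨z, hzy, rfl⟩ := hrk.exists_rk_eq (k := k) (by omega)
    obtain ⟨w, hzw, hwy⟩ := exists_covBy_le_of_lt (hzy.lt_of_ne (by rintro rfl; omega))
    exact ⟨w, hwy, hrk.2 z w hzw⟩

lemma IsRankFunction.le_of_rk_lt (hrk : IsRankFunction rk)
    (hstep : ∀ x y : α, rk y = rk x + 1 → x ≤ y) (h : rk x < rk y) : x ≤ y := by
  induction y using WellFoundedLT.induction with
  | _ y ih =>
    obtain ⟨w, -, hwy⟩ := exists_le_covBy_of_lt
      (bot_lt_iff_ne_bot.2 fun (hy : y = ⊥) => by rw [hy, hrk.1] at h; omega)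
    have hw := hrk.2 w y hwy
    rcases (show rk x = rk w ∨ rk x < rk w by omega) with hxw | hxw
    · exact hstep x y (by omega)
    · exact (ih w hwy.lt hxw).trans hwy.le

end RankFunction

section Levels

variable {α : Type*} [Fintype α] [PartialOrder α] {rk : α → ℕ} {x y : α}

noncomputable def levelIcc (rk : α → ℕ) (x y : α) (k : ℕ) : Finset α :=
  univ.filter fun z => x ≤ z ∧ z ≤ y ∧ rk z = k

@[simp]
lemma mem_levelIcc {z : α} {k : ℕ} : z ∈ levelIcc rk x y k ↔ x ≤ z ∧ z ≤ y ∧ rk z = k := by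
  simp [levelIcc]

@[simp]
lemma mem_levelIcc_bot_top [BoundedOrder α] {z : α} {k : ℕ} :
    z ∈ levelIcc rk ⊥ ⊤ k ↔ rk z = k := by
  simp

lemma levelIcc_mono {x' y' : α} {k : ℕ} (hx : x' ≤ x) (hy : y ≤ y') :
    levelIcc rk x y k ⊆ levelIcc rk x' y' k := fun _ hz => by
  rw [mem_levelIcc] at hz ⊢
  exact ⟨hx.trans hz.1, hz.2.1.trans hy, hz.2.2⟩

lemma sum_card_levelIcc_comm (x y : α) (i j : ℕ) :
    ∑ z ∈ levelIcc rk x y i, #(levelIcc rk z y j) =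
      ∑ w ∈ levelIcc rk x y j, #(levelIcc rk x w i) := by
  simp only [card_eq_sum_ones]
  refine Finset.sum_comm' fun z w => ?_
  simp only [mem_levelIcc]
  constructor
  · rintro ⟨⟨hxz, -, hz⟩, hzw, hwy, hw⟩; exact ⟨⟨hxz, hzw, hz⟩, hxz.trans hzw, hwy, hw⟩
  · rintro ⟨⟨hxz, hzw, hz⟩, -, hwy, hw⟩; exact ⟨⟨hxz, hzw.trans hwy, hz⟩, hzw, hwy, hw⟩

lemma IsEulerian.sum_neg_one_pow_eq_zero (hE : IsEulerian rk) (hxy : x < y) :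
    ∑ z ∈ univ.filter (fun z => x ≤ z ∧ z ≤ y), (-1 : ℤ) ^ rk z = 0 := by
  have h := hE x y hxy
  rw [EulerPoincare] at h
  rw [← sum_filter_add_sum_filter_not _ (fun z => Even (rk z))]
  rw [sum_congr rfl fun z hz => (mem_filter.1 hz).2.neg_one_pow,
    sum_congr rfl fun z hz => (Nat.not_even_iff_odd.1 (mem_filter.1 hz).2).neg_one_pow]
  simp only [sum_const, filter_filter, and_assoc, h]
  simp

lemma card_levelIcc_mul_eq_card_mul [BoundedOrder α] {i j p q : ℕ}
    (habove : ∀ z, rk z = i → #(levelIcc rk z ⊤ j) = p)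
    (hbelow : ∀ w, rk w = j → #(levelIcc rk ⊥ w i) = q) :
    #(levelIcc rk ⊥ ⊤ i) * p = #(levelIcc rk ⊥ ⊤ j) * q := by
  calc #(levelIcc rk ⊥ ⊤ i) * p = ∑ z ∈ levelIcc rk ⊥ ⊤ i, #(levelIcc rk z ⊤ j) := by
        rw [sum_congr rfl fun z hz => habove z (mem_levelIcc_bot_top.1 hz), sum_const,
          smul_eq_mul]
    _ = ∑ w ∈ levelIcc rk ⊥ ⊤ j, #(levelIcc rk ⊥ w i) := sum_card_levelIcc_comm _ _ _ _
    _ = #(levelIcc rk ⊥ ⊤ j) * q := by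
        rw [sum_congr rfl fun w hw => hbelow w (mem_levelIcc_bot_top.1 hw), sum_const,
          smul_eq_mul]

lemma le_of_card_levelIcc_eq [BoundedOrder α] {k : ℕ}
    (h : #(levelIcc rk x ⊤ k) = #(levelIcc rk ⊥ ⊤ k)) (hy : rk y = k) : x ≤ y := by
  have hy' : y ∈ levelIcc rk x ⊤ k :=
    eq_of_subset_of_card_le (levelIcc_mono bot_le le_rfl) h.ge ▸ mem_levelIcc_bot_top.2 hy
  exact (mem_levelIcc.1 hy').1

lemma nat_card_rk_eq [BoundedOrder α] (k : ℕ) :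
    Nat.card {x // rk x = k} = #(levelIcc rk ⊥ ⊤ k) := by
  rw [Nat.card_eq_fintype_card, Fintype.card_subtype]
  congr 1
  ext
  simp

end Levels

section GradedLevels

variable {α : Type*} [Fintype α] [PartialOrder α] [OrderBot α] {rk : α → ℕ} {B : ℕ → ℕ}
  {x y : α}

lemma IsRankFunction.levelIcc_rk_left (hrk : IsRankFunction rk) (hxy : x ≤ y) :
    levelIcc rk x y (rk x) = {x} := by
  ext z
  simp only [mem_levelIcc, mem_singleton]
  exact ⟨fun h => (hrk.eq_of_le h.1 h.2.2.le).symm, by rintro rfl; exact ⟨le_rfl, hxy, rfl⟩⟩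

lemma IsRankFunction.levelIcc_rk_right (hrk : IsRankFunction rk) (hxy : x ≤ y) :
    levelIcc rk x y (rk y) = {y} := by
  ext z
  simp only [mem_levelIcc, mem_singleton]
  exact ⟨fun h => hrk.eq_of_le h.2.1 h.2.2.ge, by rintro rfl; exact ⟨hxy, le_rfl, rfl⟩⟩

lemma IsRankFunction.levelIcc_bot_zero (hrk : IsRankFunction rk) : levelIcc rk ⊥ y 0 = {⊥} :=
  hrk.1 ▸ hrk.levelIcc_rk_left bot_le

lemma IsRankFunction.levelIcc_bot_top [OrderTop α] (hrk : IsRankFunction rk) {n : ℕ}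
    (h : rk ⊤ = n) : levelIcc rk ⊥ ⊤ n = {⊤} :=
  h ▸ hrk.levelIcc_rk_right bot_le

lemma IsRankFunction.levelIcc_succ (hrk : IsRankFunction rk) :
    levelIcc rk x y (rk x + 1) = univ.filter fun z => x ⋖ z ∧ z ≤ y := by
  ext z
  simp only [mem_levelIcc, mem_filter, mem_univ, true_and, hrk.covBy_iff]
  exact ⟨fun ⟨hxz, hzy, hz⟩ => ⟨⟨hxz.lt_of_ne (by rintro rfl; omega), hz⟩, hzy⟩,
    fun ⟨⟨hxz, hz⟩, hzy⟩ => ⟨hxz.le, hzy, hz⟩⟩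

lemma IsBinomial.B_eq_card_mul (hrk : IsRankFunction rk) (hB : IsBinomial rk B) (hxy : x < y) :
    B (rk y - rk x) = #(levelIcc rk x y (rk x + 1)) * B (rk y - rk x - 1) := by
  rw [← hB x y hxy.le, chainCount_eq_sum_covBy hxy, ← hrk.levelIcc_succ, ← smul_eq_mul,
    ← sum_const]
  refine sum_congr rfl fun z hz => ?_
  rw [mem_levelIcc] at hz
  rw [hB z y hz.2.1]
  congr 1
  omega

lemma IsEulerian.alternating_sum_card_levelIcc (hrk : IsRankFunction rk) (hE : IsEulerian rk)
    (hxy : x < y) :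
    ∑ k ∈ range (rk y - rk x + 1), (-1 : ℤ) ^ k * #(levelIcc rk x y (rk x + k)) = 0 := by
  set I := univ.filter fun z => x ≤ z ∧ z ≤ y
  have hmaps : ∀ z ∈ I, rk z - rk x ∈ range (rk y - rk x + 1) := fun z hz => by
    have := hrk.strictMono.monotone (mem_filter.1 hz).2.2
    rw [mem_range]; omega
  have hfib : ∀ k, I.filter (fun z => rk z - rk x = k) = levelIcc rk x y (rk x + k) := by
    intro k
    ext z
    simp only [I, mem_levelIcc, mem_filter, mem_univ, true_and]
    constructor
    · rintro ⟨⟨hxz, hzy⟩, hz⟩; have := hrk.strictMono.monotone hxz; exact ⟨hxz, hzy, by omega⟩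
    · rintro ⟨hxz, hzy, hz⟩; exact ⟨⟨hxz, hzy⟩, by omega⟩
  have hsplit : ∑ z ∈ I, (-1 : ℤ) ^ rk z =
      (-1) ^ rk x * ∑ k ∈ range (rk y - rk x + 1),
        (-1 : ℤ) ^ k * #(levelIcc rk x y (rk x + k)) := by
    rw [mul_sum, ← sum_fiberwise_of_maps_to hmaps]
    refine sum_congr rfl fun k _ => ?_
    rw [hfib, sum_congr rfl fun z hz => by rw [(mem_levelIcc.1 hz).2.2], sum_const, pow_add]
    simp only [nsmul_eq_mul]
    ring
  rw [hE.sum_neg_one_pow_eq_zero hxy, eq_comm, mul_eq_zero] at hsplit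
  exact hsplit.resolve_left (pow_ne_zero _ (by norm_num))

lemma IsRankFunction.card_eq_sum_card_levelIcc [OrderTop α] (hrk : IsRankFunction rk) :
    Fintype.card α = ∑ k ∈ range (rk ⊤ + 1), #(levelIcc rk ⊥ ⊤ k) := by
  rw [← card_univ, card_eq_sum_card_fiberwise (f := rk) (t := range (rk ⊤ + 1))
    fun x _ => mem_range.2 (Nat.lt_succ_of_le (hrk.strictMono.monotone le_top))]
  refine sum_congr rfl fun k _ => congrArg card ?_
  ext
  simp

end GradedLevels

section EulerianBinomial

variable {α : Type*} [Fintype α] [PartialOrder α] [OrderBot α] {rk : α → ℕ} {B : ℕ → ℕ}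
  {x y : α}

lemma IsEulerian.card_levelIcc_eq_two (hrk : IsRankFunction rk) (hE : IsEulerian rk)
    {k : ℕ} (hxy : x ≤ y) (hx : rk x + 1 = k) (hy : rk y = k + 1) :
    #(levelIcc rk x y k) = 2 := by
  have hsum := hE.alternating_sum_card_levelIcc hrk
    (lt_of_le_of_rk_lt (rk := rk) hxy (by omega))
  rw [show rk y - rk x + 1 = 3 by omega] at hsum
  simp [sum_range_succ, hrk.levelIcc_rk_left hxy, show rk x + 2 = rk y by omega,
    hrk.levelIcc_rk_right hxy, hx] at hsum
  omega

lemma IsEulerian.card_levelIcc_succ_eq (hrk : IsRankFunction rk) (hE : IsEulerian rk)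
    {k : ℕ} (hxy : x ≤ y) (hx : rk x + 1 = k) (hy : rk y = k + 2) :
    #(levelIcc rk x y (k + 1)) = #(levelIcc rk x y k) := by
  have hsum := hE.alternating_sum_card_levelIcc hrk
    (lt_of_le_of_rk_lt (rk := rk) hxy (by omega))
  rw [show rk y - rk x + 1 = 4 by omega] at hsum
  simp [sum_range_succ, hrk.levelIcc_rk_left hxy, show rk x + 3 = rk y by omega,
    hrk.levelIcc_rk_right hxy, hx, show rk x + 2 = k + 1 by omega] at hsum
  omega

variable (rk B) in
structure IsEulerianBinomial : Prop where
  isRankFunction : IsRankFunction rk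
  isBinomial : IsBinomial rk B
  isEulerian : IsEulerian rk

namespace IsEulerianBinomial

lemma B_one (hP : IsEulerianBinomial rk B) (h : x ⋖ y) : B 1 = 1 := by
  have hrec := hP.isBinomial.B_eq_card_mul hP.isRankFunction h.lt
  have hy := hP.isRankFunction.2 x y h
  rw [← hy, hP.isRankFunction.levelIcc_rk_right h.le, hy, Nat.add_sub_cancel_left,
    hP.isBinomial.B_zero x] at hrec
  simpa using hrec

lemma B_two (hP : IsEulerianBinomial rk B) (hy : 2 ≤ rk y) : B 2 = 2 := by
  have hrk := hP.isRankFunction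
  obtain ⟨w, -, hw⟩ := hrk.exists_rk_eq hy
  have hmid := hP.isEulerian.card_levelIcc_eq_two hrk bot_le rfl (by rw [hw, hrk.1])
  obtain ⟨z, hz⟩ := card_pos.1 (hmid ▸ two_pos)
  rw [hrk.levelIcc_succ, mem_filter] at hz
  have hrec := hP.isBinomial.B_eq_card_mul hrk (hrk.bot_lt (x := w) (by omega))
  rw [hmid, hw, hrk.1, hP.B_one hz.2.1] at hrec
  exact hrec

end IsEulerianBinomial

end EulerianBinomial

namespace IsEulerianBinomial

variable {α : Type*} [Fintype α] [PartialOrder α] [BoundedOrder α] {rk : α → ℕ} {B : ℕ → ℕ}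
  {x y z c : α}

lemma rk_le_four (hP : IsEulerianBinomial rk B) (h4 : rk ⊤ = 4) (x : α) : rk x ≤ 4 :=
  h4 ▸ hP.isRankFunction.strictMono.monotone le_top

lemma B_three_eq_two_mul_card_above_two (hP : IsEulerianBinomial rk B) (h4 : rk ⊤ = 4)
    (hz : rk z = 1) :
    B 3 = 2 * #(levelIcc rk z ⊤ 2) := by
  have hrec := hP.isBinomial.B_eq_card_mul hP.isRankFunction
    (lt_of_le_of_rk_lt (rk := rk) le_top (by omega) : z < ⊤)
  rw [h4, hz, hP.B_two (y := ⊤) (by omega)] at hrec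
  simpa [mul_comm] using hrec

lemma B_three_eq_two_mul_card_below_one (hP : IsEulerianBinomial rk B) (h4 : rk ⊤ = 4)
    (hc : rk c = 3) : B 3 = 2 * #(levelIcc rk ⊥ c 1) := by
  have hrk := hP.isRankFunction
  have hrec := hP.isBinomial.B_eq_card_mul hrk (hrk.bot_lt (x := c) (by omega))
  rw [hc, hrk.1, hP.B_two (y := ⊤) (by omega)] at hrec
  simpa [mul_comm] using hrec

lemma B_four_eq (hP : IsEulerianBinomial rk B) (h4 : rk ⊤ = 4) :
    B 4 = #(levelIcc rk ⊥ ⊤ 1) * B 3 := by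
  have hrk := hP.isRankFunction
  have hrec := hP.isBinomial.B_eq_card_mul hrk (hrk.bot_lt (x := ⊤) (by omega))
  simpa [h4, hrk.1] using hrec

lemma B_three_pos (hP : IsEulerianBinomial rk B) (h4 : rk ⊤ = 4) : 0 < B 3 := by
  have hpos := chainCount_pos (bot_le : (⊥ : α) ≤ ⊤)
  rw [hP.isBinomial ⊥ ⊤ bot_le, h4, hP.isRankFunction.1, hP.B_four_eq h4] at hpos
  exact pos_of_mul_pos_right hpos (Nat.zero_le _)

lemma B_three_eq_two_mul_card_above_three (hP : IsEulerianBinomial rk B) (h4 : rk ⊤ = 4)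
    (hz : rk z = 1) : B 3 = 2 * #(levelIcc rk z ⊤ 3) := by
  rw [hP.isEulerian.card_levelIcc_succ_eq hP.isRankFunction le_top (by omega) (by omega),
    hP.B_three_eq_two_mul_card_above_two h4 hz]

lemma B_three_eq_two_mul_card_below_two (hP : IsEulerianBinomial rk B) (h4 : rk ⊤ = 4)
    (hc : rk c = 3) : B 3 = 2 * #(levelIcc rk ⊥ c 2) := by
  rw [hP.isEulerian.card_levelIcc_succ_eq hP.isRankFunction bot_le
    (by rw [hP.isRankFunction.1]) (by omega), hP.B_three_eq_two_mul_card_below_one h4 hc]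

lemma card_levelIcc_two_add_two (hP : IsEulerianBinomial rk B) (h4 : rk ⊤ = 4) :
    #(levelIcc rk ⊥ ⊤ 2) + 2 = #(levelIcc rk ⊥ ⊤ 1) + #(levelIcc rk ⊥ ⊤ 3) := by
  have hrk := hP.isRankFunction
  have hsum := hP.isEulerian.alternating_sum_card_levelIcc hrk
    (hrk.bot_lt (x := ⊤) (by omega))
  rw [h4, hrk.1] at hsum
  simp [sum_range_succ, hrk.levelIcc_bot_zero, hrk.levelIcc_bot_top h4] at hsum
  omega

lemma card_levelIcc_three_eq (hP : IsEulerianBinomial rk B) (h4 : rk ⊤ = 4) :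
    #(levelIcc rk ⊥ ⊤ 3) = #(levelIcc rk ⊥ ⊤ 1) := by
  have h := card_levelIcc_mul_eq_card_mul (rk := rk) (i := 1) (j := 3) (p := B 3 / 2)
    (q := B 3 / 2) (fun z hz => by have := hP.B_three_eq_two_mul_card_above_three h4 hz; omega)
    (fun c hc => by have := hP.B_three_eq_two_mul_card_below_one h4 hc; omega)
  obtain ⟨z, -, hz⟩ := hP.isRankFunction.exists_rk_eq (y := ⊤) (k := 1) (by omega)
  have := hP.B_three_eq_two_mul_card_above_two h4 hz
  have := hP.B_three_pos h4
  exact (Nat.eq_of_mul_eq_mul_right (by omega) h).symm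

lemma card_levelIcc_one_eq_two_or_four (hP : IsEulerianBinomial rk B) (h4 : rk ⊤ = 4) :
    (#(levelIcc rk ⊥ ⊤ 1) = 2 ∧ B 3 = 4) ∨ (#(levelIcc rk ⊥ ⊤ 1) = 4 ∧ B 3 = 6) := by
  have hrk := hP.isRankFunction
  have ham := card_levelIcc_mul_eq_card_mul (rk := rk) (i := 1) (j := 2) (p := B 3 / 2) (q := 2)
    (fun z hz => by have := hP.B_three_eq_two_mul_card_above_two h4 hz; omega)
    (fun w hw => hP.isEulerian.card_levelIcc_eq_two hrk bot_le (by rw [hrk.1]) hw)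
  have heuler := hP.card_levelIcc_two_add_two h4
  obtain ⟨z, -, hz⟩ := hrk.exists_rk_eq (y := ⊤) (k := 1) (by omega)
  have hB3 := hP.B_three_eq_two_mul_card_above_two h4 hz
  have hpos := hP.B_three_pos h4
  rw [hB3, Nat.mul_div_cancel_left _ two_pos] at ham
  rw [hP.card_levelIcc_three_eq h4] at heuler
  set a := #(levelIcc rk ⊥ ⊤ 1)
  set u := #(levelIcc rk z ⊤ 2)
  -- now `a * u = 4 * a - 4`, i.e. `a * (4 - u) = 4`
  have hu : u < 4 := by
    by_contra! hu
    have := Nat.mul_le_mul_left a hu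
    omega
  interval_cases u <;> omega

end IsEulerianBinomial

lemma nonempty_orderIso_of_le_iff {α β : Type*} [PartialOrder α] [PartialOrder β] [Finite α]
    [Finite β] (f : α → ℕ) (g : β → ℕ) (hf : ∀ x y, x ≤ y ↔ x = y ∨ f x < f y)
    (hg : ∀ x y, x ≤ y ↔ x = y ∨ g x < g y)
    (hcard : ∀ k, Nat.card {x // f x = k} = Nat.card {y // g y = k}) : Nonempty (α ≃o β) := by
  let e : α ≃ β := Equiv.ofFiberEquiv fun k => (Finite.card_eq.1 (hcard k)).some
  have he : ∀ x, g (e x) = f x := Equiv.ofFiberEquiv_map _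
  exact ⟨⟨e, fun {x y} => by rw [hg, hf, he, he, e.injective.eq_iff]⟩⟩

namespace IsEulerianBinomial

variable {α : Type*} [Fintype α] [PartialOrder α] [BoundedOrder α] {rk : α → ℕ} {B : ℕ → ℕ}

lemma le_iff_of_B_three_eq_four (hP : IsEulerianBinomial rk B) (h4 : rk ⊤ = 4)
    (ha : #(levelIcc rk ⊥ ⊤ 1) = 2) (hB3 : B 3 = 4) (x y : α) : x ≤ y ↔ x = y ∨ rk x < rk y := by
  have hrk := hP.isRankFunction
  have hc := hP.card_levelIcc_three_eq h4
  have hm := hP.card_levelIcc_two_add_two h4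
  have hstep : ∀ a b : α, rk b = rk a + 1 → a ≤ b := by
    intro a b hab
    have := hP.rk_le_four h4 b
    rcases (show rk a = 0 ∨ rk a = 1 ∨ rk a = 2 ∨ rk a = 3 by omega) with ha | ha | ha | ha
    · exact (hrk.eq_of_le bot_le (by rw [ha, hrk.1])).ge.trans bot_le
    · have := hP.B_three_eq_two_mul_card_above_two h4 ha
      exact le_of_card_levelIcc_eq (rk := rk) (k := 2) (by omega) (by omega)
    · exact le_of_card_levelIcc_eq (rk := rk) (k := 3)
        (by rw [hP.isEulerian.card_levelIcc_eq_two hrk le_top (by omega) (by omega)]; omega)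
        (by omega)
    · exact le_top.trans (hrk.eq_of_le le_top (by omega)).ge
  refine ⟨fun h => ?_, ?_⟩
  · rcases h.eq_or_lt with h | h
    · exact Or.inl h
    · exact Or.inr (hrk.strictMono h)
  · rintro (rfl | h)
    · exact le_rfl
    · exact hrk.le_of_rk_lt hstep h

lemma nonempty_orderIso_butterfly (hP : IsEulerianBinomial rk B) (h4 : rk ⊤ = 4)
    (ha : #(levelIcc rk ⊥ ⊤ 1) = 2) (hB3 : B 3 = 4) : Nonempty (α ≃o Butterfly 4) := by
  have hrk := hP.isRankFunction
  refine nonempty_orderIso_of_le_iff rk Butterfly.rk (hP.le_iff_of_B_three_eq_four h4 ha hB3)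
    (fun _ _ => Iff.rfl) fun k => ?_
  rw [nat_card_rk_eq, Nat.card_eq_fintype_card]
  have hc := hP.card_levelIcc_three_eq h4
  have hm := hP.card_levelIcc_two_add_two h4
  rcases le_or_gt k 4 with hk | hk
  · interval_cases k
    · rw [hrk.levelIcc_bot_zero, card_singleton]; decide
    · rw [ha]; decide
    · rw [show #(levelIcc rk ⊥ ⊤ 2) = 2 by omega]; decide
    · rw [hc, ha]; decide
    · rw [hrk.levelIcc_bot_top h4, card_singleton]; decide
  · have : IsEmpty {p : Butterfly 4 // Butterfly.rk p = k} := ⟨fun ⟨p, hp⟩ => by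
      have := p.1.1.2; simp only [Butterfly.rk] at hp; omega⟩
    rw [Fintype.card_eq_zero, card_eq_zero, eq_empty_iff_forall_notMem]
    intro z hz
    have := hP.rk_le_four h4 z
    rw [mem_levelIcc_bot_top] at hz
    omega

end IsEulerianBinomial

section AtomsBelow

variable {α : Type*} [Fintype α] [PartialOrder α] {rk : α → ℕ} {x : α}

noncomputable def atomsBelow (rk : α → ℕ) (x : α) : Finset {a : α // rk a = 1} :=
  univ.filter fun a => a.1 ≤ x

@[simp]
lemma mem_atomsBelow {a : {a : α // rk a = 1}} : a ∈ atomsBelow rk x ↔ a.1 ≤ x := by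
  simp [atomsBelow]

lemma atomsBelow_mono : Monotone (atomsBelow rk) := fun _ _ hxy _ ha =>
  mem_atomsBelow.2 ((mem_atomsBelow.1 ha).trans hxy)

lemma card_atomsBelow [OrderBot α] : #(atomsBelow rk x) = #(levelIcc rk ⊥ x 1) := by
  rw [← card_map (Function.Embedding.subtype _)]
  congr 1
  ext z
  simp [and_comm]

lemma card_atoms [BoundedOrder α] :
    Fintype.card {a : α // rk a = 1} = #(levelIcc rk ⊥ ⊤ 1) := by
  rw [← Nat.card_eq_fintype_card, nat_card_rk_eq]

end AtomsBelow

namespace IsEulerianBinomial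

variable {α : Type*} [Fintype α] [PartialOrder α] [BoundedOrder α] {rk : α → ℕ} {B : ℕ → ℕ}
  {a b c x y : α}

lemma card_atomsBelow_eq_rk (hP : IsEulerianBinomial rk B) (h4 : rk ⊤ = 4)
    (ha : #(levelIcc rk ⊥ ⊤ 1) = 4) (hB3 : B 3 = 6) (x : α) : #(atomsBelow rk x) = rk x := by
  have hrk := hP.isRankFunction
  rw [card_atomsBelow]
  have := hP.rk_le_four h4 x
  rcases (show rk x = 0 ∨ rk x = 1 ∨ rk x = 2 ∨ rk x = 3 ∨ rk x = 4 by omega)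
    with hx | hx | hx | hx | hx
  · rw [hx, card_eq_zero, eq_empty_iff_forall_notMem]
    intro z hz
    have := hrk.strictMono.monotone (mem_levelIcc.1 hz).2.1
    rw [mem_levelIcc] at hz
    omega
  · rw [← hx, hrk.levelIcc_rk_right bot_le, card_singleton, hx]
  · rw [hx, hP.isEulerian.card_levelIcc_eq_two hrk bot_le (by rw [hrk.1]) hx]
  · have := hP.B_three_eq_two_mul_card_below_one h4 hx
    omega
  · rw [hrk.eq_of_le (le_top : x ≤ ⊤) (by omega), ha, h4]

lemma exists_rk_two_between (hP : IsEulerianBinomial rk B) (h4 : rk ⊤ = 4) (hB3 : B 3 = 6)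
    (hc : rk c = 3) (ha : rk a = 1) (hb : rk b = 1) (hac : a ≤ c) (hbc : b ≤ c) :
    ∃ w, rk w = 2 ∧ a ≤ w ∧ b ≤ w ∧ w ≤ c := by
  have hrk := hP.isRankFunction
  have h3 := hP.B_three_eq_two_mul_card_below_two h4 hc
  obtain ⟨w, hw⟩ := inter_nonempty_of_card_lt_card_add_card
    (levelIcc_mono (rk := rk) (k := 2) (bot_le : ⊥ ≤ a) (le_refl c))
    (levelIcc_mono (rk := rk) (k := 2) (bot_le : ⊥ ≤ b) (le_refl c))
    (by rw [hP.isEulerian.card_levelIcc_eq_two hrk hac (by omega) (by omega),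
      hP.isEulerian.card_levelIcc_eq_two hrk hbc (by omega) (by omega)]; omega)
  simp only [mem_inter, mem_levelIcc] at hw
  exact ⟨w, hw.1.2.2, hw.1.1, hw.2.1, hw.1.2.1⟩

lemma exists_rk_two_above (hP : IsEulerianBinomial rk B) (h4 : rk ⊤ = 4)
    (ha4 : #(levelIcc rk ⊥ ⊤ 1) = 4) (hB3 : B 3 = 6) (ha : rk a = 1) (hb : rk b = 1) :
    ∃ w, rk w = 2 ∧ a ≤ w ∧ b ≤ w := by
  obtain ⟨c, hc⟩ := inter_nonempty_of_card_lt_card_add_card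
    (levelIcc_mono (rk := rk) (k := 3) (bot_le : ⊥ ≤ a) (le_refl ⊤))
    (levelIcc_mono (rk := rk) (k := 3) (bot_le : ⊥ ≤ b) (le_refl ⊤))
    (by have := hP.B_three_eq_two_mul_card_above_three h4 ha
        have := hP.B_three_eq_two_mul_card_above_three h4 hb
        rw [hP.card_levelIcc_three_eq h4]; omega)
  simp only [mem_inter, mem_levelIcc] at hc
  obtain ⟨w, hw, haw, hbw, -⟩ := hP.exists_rk_two_between h4 hB3 hc.1.2.2 ha hb hc.1.1 hc.2.1
  exact ⟨w, hw, haw, hbw⟩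

lemma exists_rk_three_not_above (hP : IsEulerianBinomial rk B) (h4 : rk ⊤ = 4)
    (ha4 : #(levelIcc rk ⊥ ⊤ 1) = 4) (hB3 : B 3 = 6) (ha : rk a = 1) :
    ∃ c, rk c = 3 ∧ ¬ a ≤ c := by
  obtain ⟨c, hc, hac⟩ := exists_mem_notMem_of_card_lt_card (s := levelIcc rk a ⊤ 3)
    (t := levelIcc rk ⊥ ⊤ 3)
    (by have := hP.B_three_eq_two_mul_card_above_three h4 ha
        rw [hP.card_levelIcc_three_eq h4]; omega)
  rw [mem_levelIcc_bot_top] at hc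
  exact ⟨c, hc, fun h => hac (mem_levelIcc.2 ⟨h, le_top, hc⟩)⟩

lemma atomsBelow_surjective (hP : IsEulerianBinomial rk B) (h4 : rk ⊤ = 4)
    (ha4 : #(levelIcc rk ⊥ ⊤ 1) = 4) (hB3 : B 3 = 6) : Function.Surjective (atomsBelow rk) := by
  intro s
  have hA : Fintype.card {a : α // rk a = 1} = 4 := card_atoms.trans ha4
  have hcard := hP.card_atomsBelow_eq_rk h4 ha4 hB3
  have hs : #s ≤ 4 := hA ▸ card_le_univ s
  interval_cases h : #s
  · refine ⟨⊥, ?_⟩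
    rw [card_eq_zero.1 h, ← card_eq_zero, hcard, hP.isRankFunction.1]
  · obtain ⟨a, rfl⟩ := card_eq_one.1 h
    refine ⟨a.1, (eq_of_subset_of_card_le ?_ ?_).symm⟩
    · exact singleton_subset_iff.2 (mem_atomsBelow.2 le_rfl)
    · rw [hcard, a.2, card_singleton]
  · obtain ⟨a, b, hab, rfl⟩ := card_eq_two.1 h
    obtain ⟨w, hw, haw, hbw⟩ := hP.exists_rk_two_above h4 ha4 hB3 a.2 b.2
    refine ⟨w, (eq_of_subset_of_card_le ?_ ?_).symm⟩
    · exact insert_subset (mem_atomsBelow.2 haw) (singleton_subset_iff.2 (mem_atomsBelow.2 hbw))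
    · rw [hcard, hw, card_pair hab]
  · obtain ⟨a, ha⟩ := card_eq_one.1 (show #sᶜ = 1 by rw [card_compl, hA, h])
    obtain ⟨c, hc, hac⟩ := hP.exists_rk_three_not_above h4 ha4 hB3 a.2
    refine ⟨c, eq_of_subset_of_card_le (fun b hb => ?_) (by rw [h, hcard, hc])⟩
    by_contra hbs
    rw [← mem_compl, ha, mem_singleton] at hbs
    exact hac (hbs ▸ mem_atomsBelow.1 hb)
  · refine ⟨⊤, ?_⟩
    rw [eq_univ_of_card s (h.trans hA.symm), eq_univ_iff_forall]
    exact fun a => mem_atomsBelow.2 le_top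

lemma atomsBelow_bijective (hP : IsEulerianBinomial rk B) (h4 : rk ⊤ = 4)
    (ha4 : #(levelIcc rk ⊥ ⊤ 1) = 4) (hB3 : B 3 = 6) : Function.Bijective (atomsBelow rk) := by
  have hrk := hP.isRankFunction
  rw [Fintype.bijective_iff_surjective_and_card]
  refine ⟨hP.atomsBelow_surjective h4 ha4 hB3, ?_⟩
  have hc := hP.card_levelIcc_three_eq h4
  have hm := hP.card_levelIcc_two_add_two h4
  rw [Fintype.card_finset, card_atoms, hrk.card_eq_sum_card_levelIcc, h4]
  simp only [sum_range_succ, range_zero, sum_empty, hrk.levelIcc_bot_zero,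
    hrk.levelIcc_bot_top h4, card_singleton]
  rw [ha4] at hc hm ⊢
  omega

lemma le_of_atomsBelow_subset (hP : IsEulerianBinomial rk B) (h4 : rk ⊤ = 4)
    (ha4 : #(levelIcc rk ⊥ ⊤ 1) = 4) (hB3 : B 3 = 6) (h : atomsBelow rk x ⊆ atomsBelow rk y) :
    x ≤ y := by
  have hrk := hP.isRankFunction
  have hcard := hP.card_atomsBelow_eq_rk h4 ha4 hB3
  have hinj := (hP.atomsBelow_bijective h4 ha4 hB3).injective
  by_cases hyx : rk y ≤ rk x
  · exact (hinj (eq_of_subset_of_card_le h (by rwa [hcard, hcard]))).le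
  have := hP.rk_le_four h4 y
  rcases (show rk x = 0 ∨ rk x = 1 ∨ rk y = 4 ∨ (rk x = 2 ∧ rk y = 3) by omega)
    with hx | hx | hy | ⟨hx, hy⟩
  · exact (hrk.eq_of_le bot_le (by rw [hx, hrk.1])).ge.trans bot_le
  · exact mem_atomsBelow.1 (h (mem_atomsBelow.2 le_rfl : (⟨x, hx⟩ : {a // rk a = 1}) ∈ _))
  · exact le_top.trans (hrk.eq_of_le le_top (by omega)).ge
  · obtain ⟨a, b, hab, hxab⟩ := card_eq_two.1 (hcard x ▸ hx)
    have hay := mem_atomsBelow.1 (h (hxab ▸ mem_insert_self a {b}))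
    have hby := mem_atomsBelow.1 (h (hxab ▸ mem_insert_of_mem (mem_singleton_self b)))
    obtain ⟨w, hw, haw, hbw, hwy⟩ :=
      hP.exists_rk_two_between h4 hB3 hy a.2 b.2 hay hby
    have hxw : atomsBelow rk x = atomsBelow rk w := by
      refine eq_of_subset_of_card_le ?_ (by rw [hcard, hcard, hw, hx])
      rw [hxab]
      exact insert_subset (mem_atomsBelow.2 haw) (singleton_subset_iff.2 (mem_atomsBelow.2 hbw))
    exact hinj hxw ▸ hwy

lemma nonempty_orderIso_finset (hP : IsEulerianBinomial rk B) (h4 : rk ⊤ = 4)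
    (ha4 : #(levelIcc rk ⊥ ⊤ 1) = 4) (hB3 : B 3 = 6) : Nonempty (α ≃o Finset (Fin 4)) := by
  let φ : α ↪o Finset {a // rk a = 1} := OrderEmbedding.ofMapLEIff (atomsBelow rk) fun _ _ =>
    ⟨hP.le_of_atomsBelow_subset h4 ha4 hB3, fun h => atomsBelow_mono h⟩
  let e := Fintype.equivFinOfCardEq (card_atoms.trans ha4)
  exact ⟨(OrderIso.ofSurjective φ (hP.atomsBelow_surjective h4 ha4 hB3)).trans
    { e.finsetCongr with map_rel_iff' := by simp [Equiv.finsetCongr_apply] }⟩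

end IsEulerianBinomial

/-- Every finite Eulerian binomial poset of rank `4` is isomorphic to the
butterfly poset `T 4` or to the boolean lattice `B_4`. -/
theorem statement6 {α : Type*} [Fintype α] [PartialOrder α] [BoundedOrder α]
    (rk : α → ℕ) (B : ℕ → ℕ) (hrk : IsRankFunction rk) (hB : IsBinomial rk B)
    (hE : IsEulerian rk) (hrank : rk ⊤ = 4) :
    Nonempty (α ≃o Butterfly 4) ∨ Nonempty (α ≃o Finset (Fin 4)) := by
  have hP : IsEulerianBinomial rk B := ⟨hrk, hB, hE⟩
  rcases hP.card_levelIcc_one_eq_two_or_four hrank with ⟨ha, hB3⟩ | ⟨ha, hB3⟩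
  · exact Or.inl (hP.nonempty_orderIso_butterfly hrank ha hB3)
  · exact Or.inr (hP.nonempty_orderIso_finset hrank ha hB3)
end

section
/- If Q is an Eulerian poset of odd rank with 0̂ and 1̂, then the k-summation ⊞^k(Q) is Eulerian for every positive integer k. -/
open scoped Classical

/-! An interval of `⊞^k Q` other than `[0̂, 1̂]` lies in a single copy of `Q`, where it is a
rank-preserving copy of an interval of `Q`. In the alternating sum `∑ (-1)^ρ` over all of
`⊞^k Q`, the proper parts of the copies contribute `k` times that of the proper part of `Q`,
which vanishes because `Q` is Eulerian and `0̂`, `1̂` have ranks of opposite parity; the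
`0̂` and `1̂` of `⊞^k Q` cancel for the same reason. -/

open Finset

section EulerPoincare

variable {α β : Type*} [Fintype α] [PartialOrder α] [Fintype β] [PartialOrder β]

theorem eulerPoincare_iff_sum_neg_one_pow (rk : α → ℕ) (x y : α) :
    EulerPoincare rk x y ↔ ∑ z with x ≤ z ∧ z ≤ y, (-1 : ℤ) ^ rk z = 0 := by
  rw [← sum_filter_add_sum_filter_not _ (fun z => Even (rk z)),
    sum_congr rfl fun z hz => (mem_filter.mp hz).2.neg_one_pow,
    sum_congr rfl fun z hz => (Nat.not_even_iff_odd.mp (mem_filter.mp hz).2).neg_one_pow]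
  simp only [sum_const, filter_filter, and_assoc, nsmul_eq_mul, mul_one, mul_neg,
    ← sub_eq_add_neg, sub_eq_zero, Nat.cast_inj, EulerPoincare]

theorem filter_interval_rank_eq_map (f : α ↪o β) {rkα : α → ℕ} {rkβ : β → ℕ}
    (hrk : ∀ a, rkβ (f a) = rkα a) {a b : α}
    (hf : ∀ z, f a ≤ z → z ≤ f b → z ∈ Set.range f) (p : ℕ → Prop) [DecidablePred p] :
    ({z | f a ≤ z ∧ z ≤ f b ∧ p (rkβ z)} : Finset β) =
      ({q | a ≤ q ∧ q ≤ b ∧ p (rkα q)} : Finset α).map f.toEmbedding := by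
  ext z
  simp only [mem_filter, mem_univ, true_and, mem_map, RelEmbedding.coe_toEmbedding]
  constructor
  · rintro ⟨haz, hzb, hz⟩
    obtain ⟨q, rfl⟩ := hf z haz hzb
    exact ⟨q, ⟨f.le_iff_le.mp haz, f.le_iff_le.mp hzb, hrk q ▸ hz⟩, rfl⟩
  · rintro ⟨q, ⟨haq, hqb, hq⟩, rfl⟩
    exact ⟨f.le_iff_le.mpr haq, f.le_iff_le.mpr hqb, (hrk q).symm ▸ hq⟩

theorem EulerPoincare.map (f : α ↪o β) {rkα : α → ℕ} {rkβ : β → ℕ}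
    (hrk : ∀ a, rkβ (f a) = rkα a) {a b : α}
    (hf : ∀ z, f a ≤ z → z ≤ f b → z ∈ Set.range f) (h : EulerPoincare rkα a b) :
    EulerPoincare rkβ (f a) (f b) := by
  unfold EulerPoincare at h ⊢
  rw [filter_interval_rank_eq_map f hrk hf Even,
    filter_interval_rank_eq_map f hrk hf (¬ Even ·), card_map, card_map, h]

end EulerPoincare

theorem sum_eq_bot_add_top_add_sum_properPart {Q M : Type*} [Fintype Q] [PartialOrder Q]
    [BoundedOrder Q] [AddCommMonoid M] (h : (⊥ : Q) ≠ ⊤) (f : Q → M) :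
    ∑ q, f q = f ⊥ + f ⊤ + ∑ p : ProperPart Q, f p := by
  have hends : ({q | ¬(q ≠ ⊥ ∧ q ≠ ⊤)} : Finset Q) = {⊥, ⊤} := by
    ext q
    simp only [mem_filter, mem_univ, true_and, not_and_or, not_not, mem_insert, mem_singleton]
  rw [← sum_filter_not_add_sum_filter univ fun q : Q => q ≠ ⊥ ∧ q ≠ ⊤, hends, sum_pair h,
    sum_subtype _ (p := fun q : Q => q ≠ ⊥ ∧ q ≠ ⊤) (by simp)]

theorem bot_lt_top_of_odd_rank {Q : Type*} [PartialOrder Q] [BoundedOrder Q] {rk : Q → ℕ}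
    (h0 : rk ⊥ = 0) (htop : Odd (rk ⊤)) : (⊥ : Q) < ⊤ :=
  bot_lt_iff_ne_bot.mpr fun h => by simp [h, h0] at htop

namespace KSum

variable {Q : Type*} [PartialOrder Q] [BoundedOrder Q] {k : ℕ}

noncomputable def emb (i : Fin k) : Q ↪o KSum k Q :=
  OrderEmbedding.ofMapLEIff
    (fun q => if h : q = ⊥ then ⊥ else if h' : q = ⊤ then ⊤
      else WithBot.some (WithTop.some ⟨i, q, h, h'⟩))
    fun a b => by
      by_cases ha : a = ⊥ <;> by_cases ha' : a = ⊤ <;> by_cases hb : b = ⊥ <;>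
        by_cases hb' : b = ⊤ <;> simp_all [Sigma.mk_le_mk_iff]

theorem emb_bot (i : Fin k) : emb i (⊥ : Q) = ⊥ := by
  simp [emb]

theorem emb_top (i : Fin k) (h : (⊥ : Q) ≠ ⊤) : emb i (⊤ : Q) = ⊤ := by
  simp [emb, h.symm]

theorem emb_properPart (i : Fin k) (p : ProperPart Q) :
    emb i p.1 = WithBot.some (WithTop.some ⟨i, p⟩) := by
  simp [emb, p.2.1, p.2.2]

theorem ksumRk_emb {rk : Q → ℕ} (h0 : rk ⊥ = 0) (i : Fin k) (q : Q) :
    ksumRk rk (emb i q) = rk q := by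
  by_cases hb : q = ⊥
  · simp [hb, h0, emb_bot, ksumRk]
  by_cases ht : q = ⊤
  · rw [ht, emb_top i (ht ▸ Ne.symm hb)]
    rfl
  · rw [show q = (⟨q, hb, ht⟩ : ProperPart Q).1 from rfl, emb_properPart]
    rfl

theorem exists_eq_properPart {z : KSum k Q} (hb : z ≠ ⊥) (ht : z ≠ ⊤) :
    ∃ i p, z = WithBot.some (WithTop.some ⟨i, p⟩) := by
  obtain ⟨w, rfl⟩ := WithBot.ne_bot_iff_exists.mp hb
  obtain ⟨⟨i, p⟩, rfl⟩ :=
    (WithTop.ne_top_iff_exists (x := w)).mp (by rintro rfl; exact ht rfl)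
  exact ⟨i, p, rfl⟩

theorem mem_range_emb_of_comparable {i : Fin k} {p : ProperPart Q} {z : KSum k Q}
    (hz : WithBot.some (WithTop.some ⟨i, p⟩) ≤ z ∨ z ≤ WithBot.some (WithTop.some ⟨i, p⟩)) :
    z ∈ Set.range (emb i) := by
  by_cases hb : z = ⊥
  · exact ⟨⊥, hb ▸ emb_bot i⟩
  by_cases ht : z = ⊤
  · exact ⟨⊤, ht ▸ emb_top i (p.2.1.bot_lt.trans_le le_top).ne⟩
  obtain ⟨j, q, rfl⟩ := exists_eq_properPart hb ht
  obtain rfl : i = j := by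
    rcases hz with hz | hz
    · exact (Sigma.le_def.mp (by simpa using hz)).1
    · exact (Sigma.le_def.mp (by simpa using hz)).1.symm
  exact ⟨q, emb_properPart i q⟩

theorem exists_forall_mem_range_emb {x y : KSum k Q} (hxy : x < y)
    (hends : ¬(x = ⊥ ∧ y = ⊤)) :
    ∃ i, ∀ z, x ≤ z → z ≤ y → z ∈ Set.range (emb i) := by
  by_cases hx : x = ⊥
  · obtain ⟨i, p, rfl⟩ := exists_eq_properPart (hx ▸ hxy).ne_bot fun hy => hends ⟨hx, hy⟩
    exact ⟨i, fun z _ hzy => mem_range_emb_of_comparable (Or.inr hzy)⟩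
  · obtain ⟨i, p, rfl⟩ := exists_eq_properPart hx hxy.ne_top
    exact ⟨i, fun z hxz _ => mem_range_emb_of_comparable (Or.inl hxz)⟩

theorem sum_ksumRk [Fintype Q] {M : Type*} [AddCommMonoid M] (rk : Q → ℕ) (g : ℕ → M) :
    ∑ z : KSum k Q, g (ksumRk rk z) =
      g 0 + g (rk ⊤) + k • ∑ p : ProperPart Q, g (rk p) := by
  rw [show ∑ z : KSum k Q, g (ksumRk rk z) =
      ∑ z : Option (Option ((_ : Fin k) × ProperPart Q)), g (ksumRk rk z) from rfl,
    Fintype.sum_option, Fintype.sum_option, Fintype.sum_sigma]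
  change g 0 + (g (rk ⊤) + ∑ _ : Fin k, ∑ p : ProperPart Q, g (rk p)) = _
  rw [sum_const, card_univ, Fintype.card_fin, add_assoc]

theorem eulerPoincare_ksumRk_bot_top [Fintype Q] {rk : Q → ℕ} (h0 : rk ⊥ = 0)
    (htop : Odd (rk ⊤)) (hQ : EulerPoincare rk ⊥ ⊤) :
    EulerPoincare (ksumRk (k := k) rk) ⊥ ⊤ := by
  rw [eulerPoincare_iff_sum_neg_one_pow] at hQ ⊢
  simp only [bot_le, le_top, true_and, filter_true] at hQ ⊢
  rw [sum_eq_bot_add_top_add_sum_properPart (bot_lt_top_of_odd_rank h0 htop).ne, h0,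
    htop.neg_one_pow] at hQ
  rw [sum_ksumRk, htop.neg_one_pow, nsmul_eq_mul]
  linear_combination (k : ℤ) * hQ

end KSum

theorem statement9_general {Q : Type*} [Fintype Q] [PartialOrder Q] [BoundedOrder Q]
    (rk : Q → ℕ) (hrk : IsRankFunction rk) (hodd : Odd (rk ⊤)) (hE : IsEulerian rk)
    (k : ℕ) :
    IsEulerian (ksumRk (k := k) rk) := by
  intro x y hxy
  by_cases hends : x = ⊥ ∧ y = ⊤
  · obtain ⟨rfl, rfl⟩ := hends
    exact KSum.eulerPoincare_ksumRk_bot_top hrk.1 hodd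
      (hE ⊥ ⊤ (bot_lt_top_of_odd_rank hrk.1 hodd))
  obtain ⟨i, hi⟩ := KSum.exists_forall_mem_range_emb hxy hends
  obtain ⟨a, rfl⟩ := hi x le_rfl hxy.le
  obtain ⟨b, rfl⟩ := hi y hxy.le le_rfl
  exact (hE a b ((KSum.emb i).lt_iff_lt.mp hxy)).map (KSum.emb i)
    (KSum.ksumRk_emb hrk.1 i) hi

/-- The `k`-summation of an Eulerian poset of odd rank is Eulerian. -/
theorem statement9 {Q : Type*} [Fintype Q] [PartialOrder Q] [BoundedOrder Q]
    (rk : Q → ℕ) (hrk : IsRankFunction rk) (hodd : Odd (rk ⊤)) (hE : IsEulerian rk)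
    (k : ℕ) (hk : 0 < k) :
    IsEulerian (ksumRk (k := k) rk) :=
  statement9_general rk hrk hodd hE k
end
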